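/- Let G be a real reductive group, r > 4·max{ε, η} with ε, η > 0, and let E ⊂ G be an η-narrow collection of (r, ε)-loxodromic elements. Then E is an (r/4, ε)-Schottky family in G. -/

import Mathlib

open Filter Set

section
variable {V : Type*} [NormedAddCommGroup V] [InnerProductSpace ℝ V]

/-- The metric `d(x,y) = sin ∠(x,y)` on projective space, on nonzero representatives. -/
noncomputable def sinDist (x y : V) : ℝ :=
  Real.sqrt (1 - (inner ℝ x y : ℝ) ^ 2 / (‖x‖ ^ 2 * ‖y‖ ^ 2))

/-- Distance from a projective point to a projective subspace. -/
noncomputable def sinDistSub (x : V) (H : Submodule ℝ V) : ℝ :=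
  sInf {t : ℝ | ∃ y ∈ H, y ≠ 0 ∧ t = sinDist x y}

/-- `g` is proximal with attracting eigenline `ℝv` (eigenvalue `c` of maximal modulus)
and complementary invariant hyperplane `H`. -/
def IsProximalTriple (g : Module.End ℝ V) (c : ℝ) (v : V) (H : Submodule ℝ V) : Prop :=
  v ≠ 0 ∧ c ≠ 0 ∧ g v = c • v ∧ (∀ x ∈ H, g x ∈ H) ∧
    IsCompl (Submodule.span ℝ {v}) H ∧
    ∀ x ∈ H, Tendsto (fun n : ℕ => ‖(g ^ n) x‖ / |c| ^ n) atTop (nhds 0)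

/-- `g` is `(r,ε)`-proximal with data `(c, v, H)`. -/
def IsRPSTriple (r ε : ℝ) (g : Module.End ℝ V) (c : ℝ) (v : V) (H : Submodule ℝ V) : Prop :=
  IsProximalTriple g c v H ∧ 2 * r ≤ sinDistSub v H ∧
    ∀ x y : V, x ≠ 0 → y ≠ 0 → ε ≤ sinDistSub x H → ε ≤ sinDistSub y H →
      sinDist (g x) (g y) ≤ ε * sinDist x y

/-- `E` is an `(r,ε)`-Schottky family. -/
def IsSchottky (r ε : ℝ) (E : Set (Module.End ℝ V)) : Prop :=
  0 < ε ∧ ε ≤ r ∧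
    ∃ (c : E → ℝ) (v : E → V) (H : E → Submodule ℝ V),
      (∀ γ : E, IsRPSTriple r ε γ.1 (c γ) (v γ) (H γ)) ∧
      ∀ γ γ' : E, 6 * r ≤ sinDistSub (v γ) (H γ')

end

/-!
For unit vectors, `sinDist a x` is the distance from `x` to the line `ℝa`; writing
`c = ⟪b,c⟫ b + (c - ⟪b,c⟫ b)` gives the triangle inequality for `sinDist`, hence
`sinDistSub x H ≤ sinDist x y + sinDistSub y H`. If the repelling hyperplanes are pairwise
`η`-close, every nonzero `y ∈ H_{g'}` lies within `η` of `H_g`, so the attracting point of `g`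
stays at distance `≥ 2r - η ≥ 6 (r/4)` from `H_{g'}`.
-/

section
variable {V : Type*} [NormedAddCommGroup V] [InnerProductSpace ℝ V]

open RealInnerProductSpace

lemma sinDist_nonneg (x y : V) : 0 ≤ sinDist x y := Real.sqrt_nonneg _

lemma sinDist_comm (x y : V) : sinDist x y = sinDist y x := by
  unfold sinDist; rw [real_inner_comm, mul_comm]

lemma sinDist_smul_right (x y : V) {t : ℝ} (ht : t ≠ 0) : sinDist x (t • y) = sinDist x y := by
  unfold sinDist
  rw [real_inner_smul_right, norm_smul, Real.norm_eq_abs, mul_pow, mul_pow, sq_abs,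
    mul_left_comm, mul_div_mul_left _ _ (pow_ne_zero 2 ht)]

lemma sinDist_smul_left (x y : V) {t : ℝ} (ht : t ≠ 0) : sinDist (t • x) y = sinDist x y := by
  rw [sinDist_comm, sinDist_smul_right _ _ ht, sinDist_comm]

lemma norm_sub_smul_sq_of_norm_eq_one {a : V} (ha : ‖a‖ = 1) (x : V) (t : ℝ) :
    ‖x - t • a‖ ^ 2 = ‖x‖ ^ 2 - ⟪a, x⟫ ^ 2 + (t - ⟪a, x⟫) ^ 2 := by
  rw [norm_sub_sq_real, real_inner_smul_right, norm_smul, Real.norm_eq_abs, mul_pow, sq_abs, ha,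
    real_inner_comm]
  ring

lemma sinDist_eq_norm_sub_inner_smul {a x : V} (ha : ‖a‖ = 1) (hx : ‖x‖ = 1) :
    sinDist a x = ‖x - ⟪a, x⟫ • a‖ := by
  rw [← Real.sqrt_sq (norm_nonneg (x - _)), norm_sub_smul_sq_of_norm_eq_one ha, sinDist, ha, hx]
  norm_num

lemma sinDist_le_norm_sub_smul {a x : V} (ha : ‖a‖ = 1) (hx : ‖x‖ = 1) (t : ℝ) :
    sinDist a x ≤ ‖x - t • a‖ := by
  rw [sinDist_eq_norm_sub_inner_smul ha hx]
  rw [← pow_le_pow_iff_left₀ (norm_nonneg _) (norm_nonneg _) two_ne_zero,norm_sub_smul_sq_of_norm_eq_one ha, norm_sub_smul_sq_of_norm_eq_one ha]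
  nlinarith [sq_nonneg (t - ⟪a, x⟫)]

lemma sinDist_triangle_of_norm_eq_one {a b c : V} (ha : ‖a‖ = 1) (hb : ‖b‖ = 1)
    (hc : ‖c‖ = 1) : sinDist a c ≤ sinDist a b + sinDist b c := by
  set q := ⟪b, c⟫
  have hq : |q| ≤ 1 := by simpa [hb, hc] using abs_real_inner_le_norm b c
  have hsplit : c - (q * ⟪a, b⟫) • a = (c - q • b) + q • (b - ⟪a, b⟫ • a) := by
    rw [smul_sub, mul_smul]; abel
  calc sinDist a c ≤ ‖c - (q * ⟪a, b⟫) • a‖ := sinDist_le_norm_sub_smul ha hc _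
    _ ≤ ‖c - q • b‖ + |q| * ‖b - ⟪a, b⟫ • a‖ := by
        rw [hsplit, ← Real.norm_eq_abs, ← norm_smul]; exact norm_add_le _ _
    _ ≤ ‖c - q • b‖ + 1 * ‖b - ⟪a, b⟫ • a‖ := by gcongr
    _ = sinDist a b + sinDist b c := by
        rw [one_mul, sinDist_eq_norm_sub_inner_smul ha hb, sinDist_eq_norm_sub_inner_smul hb hc,
          add_comm]

lemma sinDist_triangle {a b c : V} (ha : a ≠ 0) (hb : b ≠ 0) (hc : c ≠ 0) :
    sinDist a c ≤ sinDist a b + sinDist b c := by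
  have hunit : ∀ {x : V}, x ≠ 0 → ‖‖x‖⁻¹ • x‖ = 1 := fun hx => norm_smul_inv_norm hx
  have hnormalize : ∀ {x y : V}, x ≠ 0 → y ≠ 0 → sinDist x y = sinDist (‖x‖⁻¹ • x) (‖y‖⁻¹ • y) :=
    fun hx hy => by
      rw [sinDist_smul_left _ _ (inv_ne_zero (norm_ne_zero_iff.mpr hx)),
        sinDist_smul_right _ _ (inv_ne_zero (norm_ne_zero_iff.mpr hy))]
  rw [hnormalize ha hc, hnormalize ha hb, hnormalize hb hc]
  exact sinDist_triangle_of_norm_eq_one (hunit ha) (hunit hb) (hunit hc)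

lemma sinDistSub_nonneg (x : V) (H : Submodule ℝ V) : 0 ≤ sinDistSub x H :=
  Real.sInf_nonneg fun _ ⟨y, _, _, ht⟩ => ht ▸ sinDist_nonneg x y

lemma sinDistSub_le_sinDist {x y : V} {H : Submodule ℝ V} (hy : y ∈ H) (hy0 : y ≠ 0) :
    sinDistSub x H ≤ sinDist x y :=
  csInf_le ⟨0, fun _ ⟨z, _, _, ht⟩ => ht ▸ sinDist_nonneg x z⟩ ⟨y, hy, hy0, rfl⟩

lemma le_sinDistSub {x : V} {H : Submodule ℝ V} {b : ℝ} (hne : ∃ y ∈ H, y ≠ 0)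
    (h : ∀ y ∈ H, y ≠ 0 → b ≤ sinDist x y) : b ≤ sinDistSub x H := by
  obtain ⟨y, hy, hy0⟩ := hne
  exact le_csInf ⟨_, y, hy, hy0, rfl⟩ fun _ ⟨z, hz, hz0, ht⟩ => ht ▸ h z hz hz0

lemma exists_ne_zero_of_sinDistSub_pos {x : V} {H : Submodule ℝ V} (h : 0 < sinDistSub x H) :
    ∃ y ∈ H, y ≠ 0 := by
  by_contra! hH
  have hempty : {t : ℝ | ∃ y ∈ H, y ≠ 0 ∧ t = sinDist x y} = ∅ :=
    Set.eq_empty_iff_forall_notMem.mpr fun _ ⟨y, hy, hy0, _⟩ => hy0 (hH y hy)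
  rw [sinDistSub, hempty, Real.sInf_empty] at h
  exact h.false

lemma sinDistSub_le_sinDist_add_sinDistSub {x y : V} (hx : x ≠ 0) (hy : y ≠ 0)
    (H : Submodule ℝ V) : sinDistSub x H ≤ sinDist x y + sinDistSub y H := by
  rcases (sinDistSub_nonneg x H).eq_or_lt with hzero | hpos
  · rw [← hzero]; exact add_nonneg (sinDist_nonneg x y) (sinDistSub_nonneg y H)
  have hH : sinDistSub x H - sinDist x y ≤ sinDistSub y H :=
    le_sinDistSub (exists_ne_zero_of_sinDistSub_pos hpos) fun z hz hz0 => by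
      linarith [sinDistSub_le_sinDist (x := x) hz hz0, sinDist_triangle hx hy hz0]
  linarith

lemma sinDistSub_sub_le_of_forall_sinDistSub_le {x : V} {H K : Submodule ℝ V} {η : ℝ}
    (hx : x ≠ 0) (hK : ∃ y ∈ K, y ≠ 0) (hclose : ∀ y ∈ K, y ≠ 0 → sinDistSub y H ≤ η) :
    sinDistSub x H - η ≤ sinDistSub x K :=
  le_sinDistSub hK fun y hy hy0 => by
    linarith [sinDistSub_le_sinDist_add_sinDistSub hx hy0 H, hclose y hy hy0]

lemma IsRPSTriple.mono {r r' ε : ℝ} {g : Module.End ℝ V} {c : ℝ} {v : V} {H : Submodule ℝ V}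
    (h : IsRPSTriple r ε g c v H) (hr : r' ≤ r) : IsRPSTriple r' ε g c v H :=
  ⟨h.1, by linarith [h.2.1], h.2.2⟩

lemma isSchottky_image {α : Type*} (f : α → Module.End ℝ V) {E : Set α} {r ε : ℝ}
    (hε : 0 < ε) (hεr : ε ≤ r) (c : E → ℝ) (v : E → V) (H : E → Submodule ℝ V)
    (htriple : ∀ g : E, IsRPSTriple r ε (f g) (c g) (v g) (H g))
    (hsep : ∀ g g' : E, 6 * r ≤ sinDistSub (v g) (H g')) : IsSchottky r ε (f '' E) := by
  have hpre : ∀ γ : f '' E, ∃ g : E, f g = γ := fun ⟨_, g, hg, hγ⟩ => ⟨⟨g, hg⟩, hγ⟩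
  choose pre hpre using hpre
  refine ⟨hε, hεr, c ∘ pre, v ∘ pre, H ∘ pre, fun γ => ?_, fun γ γ' => hsep _ _⟩
  simpa only [Function.comp, hpre] using htriple (pre γ)

end

theorem narrow_loxodromic_is_schottky_general
    {G : Type*} [Group G] {m : ℕ}
    (V : Fin m → Type*) [∀ i, NormedAddCommGroup (V i)] [∀ i, InnerProductSpace ℝ (V i)]
    (ρ : ∀ i : Fin m, G →* Module.End ℝ (V i))
    (r ε η : ℝ) (hε : 0 < ε) (hr : 4 * max ε η < r)
    (E : Set G)
    (c : ∀ i : Fin m, E → ℝ) (v : ∀ i : Fin m, (g : E) → V i)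
    (H : ∀ i : Fin m, E → Submodule ℝ (V i))
    -- every element of `E` is `(r,ε)`-loxodromic, with the data `(c, v, H)`
    (hlox : ∀ (i : Fin m) (g : E), IsRPSTriple r ε (ρ i g.1) (c i g) (v i g) (H i g))
    -- `η`-narrowness (Hausdorff) of the repelling hyperplanes
    (hnarrow_H : ∀ (i : Fin m) (g g' : E), ∀ x ∈ H i g, x ≠ 0 →
      sinDistSub x (H i g') ≤ η) :
    ∀ i : Fin m, IsSchottky (r / 4) ε ((fun g : G => ρ i g) '' E) := by
  intro i
  have hεr : ε ≤ r / 4 := by linarith [le_max_left ε η]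
  have hηr : η ≤ r / 4 := by linarith [le_max_right ε η]
  refine isSchottky_image _ hε hεr (c i) (v i) (H i)
    (fun g => (hlox i g).mono (by linarith)) fun g g' => ?_
  have hH' : ∃ y ∈ H i g', y ≠ 0 :=
    exists_ne_zero_of_sinDistSub_pos (by linarith [(hlox i g').2.1])
  calc 6 * (r / 4) ≤ 2 * r - η := by linarith
    _ ≤ sinDistSub (v i g) (H i g) - η := by linarith [(hlox i g).2.1]
    _ ≤ sinDistSub (v i g) (H i g') :=
        sinDistSub_sub_le_of_forall_sinDistSub_le (hlox i g).1.1 hH' (hnarrow_H i g' g)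

/-- let `G` be a (real reductive) group together with its distinguished
proximal irreducible representations `ρ_i : G → GL(V_i)`, `i = 1, …, d_S`.  If
`r > 4·max{ε, η}` with `ε, η > 0` and `E ⊆ G` is an `η`-narrow collection of
`(r,ε)`-loxodromic elements (i.e. each `ρ_i(g)`, `g ∈ E`, is `(r,ε)`-proximal, the
attracting points are pairwise within distance `η` and the repelling hyperplanes pairwise
within Hausdorff distance `η` in each `P(V_i)`), then `E` is an `(r/4, ε)`-Schottky family
in `G`, i.e. each `ρ_i(E)` is an `(r/4, ε)`-Schottky family. -/
theorem narrow_loxodromic_is_schottky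
    {G : Type*} [Group G] {m : ℕ}
    (V : Fin m → Type*) [∀ i, NormedAddCommGroup (V i)] [∀ i, InnerProductSpace ℝ (V i)]
    [∀ i, FiniteDimensional ℝ (V i)]
    (ρ : ∀ i : Fin m, G →* Module.End ℝ (V i))
    (r ε η : ℝ) (hε : 0 < ε) (hη : 0 < η) (hr : 4 * max ε η < r)
    (E : Set G)
    (c : ∀ i : Fin m, E → ℝ) (v : ∀ i : Fin m, (g : E) → V i)
    (H : ∀ i : Fin m, E → Submodule ℝ (V i))
    -- every element of `E` is `(r,ε)`-loxodromic, with the data `(c, v, H)`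
    (hlox : ∀ (i : Fin m) (g : E), IsRPSTriple r ε (ρ i g.1) (c i g) (v i g) (H i g))
    -- `η`-narrowness of the attracting points
    (hnarrow_v : ∀ (i : Fin m) (g g' : E), sinDist (v i g) (v i g') ≤ η)
    -- `η`-narrowness (Hausdorff) of the repelling hyperplanes
    (hnarrow_H : ∀ (i : Fin m) (g g' : E), ∀ x ∈ H i g, x ≠ 0 →
      sinDistSub x (H i g') ≤ η) :
    ∀ i : Fin m, IsSchottky (r / 4) ε ((fun g : G => ρ i g) '' E) :=
  narrow_loxodromic_is_schottky_general V ρ r ε η hε hr E c v H hlox hnarrow_H
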